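/- arXiv:math/0703830 — 2 statements merged into one kernel-verified Lean document; each statement's English description precedes it below -/
import Mathlib

section
/- Let y : [0,T) → [0,∞) be differentiable and satisfy y'(t) ≤ C₀ h(t) y(t) for all t ∈ [0,T), where h(t) ≥ 0. Suppose sup_{0<t<T} (T−t) h(t) < 1/(2C₀). Then the function z(t) = (T−t) y(t) satisfies z'(t) + ½ y(t) ≤ 0, and consequently ∫_{t₀}^T y(t) dt ≤ 2(T−t₀) y(t₀) for every t₀ ∈ [0,T). -/
/-!
On `(0, T)` the hypotheses give `(T - t) y' ≤ C₀ (T - t) h y ≤ C₀ M y ≤ y / 2`, that is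
`z' = (T - t) y' - y ≤ -y / 2`. At `t = 0`, where the bound on `(T - t) h` is not assumed, the
inequality `y' ≤ y / (2 (T - t))` survives: by the mean value theorem the difference quotients
of `y` at `0` are controlled by the values of `y'` just to the right of `0`. Integrating
`z' ≤ -y / 2` over `[t₀, s]` and using `z s ≥ 0` gives `∫_{t₀}^s y ≤ 2 z t₀`; let `s → T`.
-/

open MeasureTheory Set Filter Topology

theorem le_of_eventually_deriv_le {f f' g : ℝ → ℝ} {a : ℝ}
    (hf : ∀ᶠ x in 𝓝[≥] a, HasDerivAt f (f' x) x) (hle : ∀ᶠ x in 𝓝[>] a, f' x ≤ g x)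
    (hg : ContinuousWithinAt g (Ioi a) a) : f' a ≤ g a := by
  refine le_of_forall_gt_imp_ge_of_dense fun B hB => ?_
  obtain ⟨c, hac, hc⟩ := mem_nhdsGE_iff_exists_Ico_subset.1 hf
  obtain ⟨d, had, hd⟩ := mem_nhdsGT_iff_exists_Ioo_subset.1
    (hle.and (hg.eventually (gt_mem_nhds hB)))
  have hslope : ∀ x ∈ Ioo a (min c d), slope f a x ≤ B := by
    intro x hx
    have hxc : x < c := hx.2.trans_le (min_le_left _ _)
    have hderiv : ∀ t ∈ Icc a x, HasDerivAt f (f' t) t :=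
      fun t ht => hc ⟨ht.1, ht.2.trans_lt hxc⟩
    have hinc := (convex_Icc a x).image_sub_le_mul_sub_of_deriv_le
      (fun t ht => (hderiv t ht).continuousAt.continuousWithinAt)
      (fun t ht => (hderiv t (interior_subset ht)).differentiableAt.differentiableWithinAt)
      (C := B) (fun t ht => by
        rw [interior_Icc] at ht
        have ⟨hfg, hgB⟩ := hd ⟨ht.1, ht.2.trans (hx.2.trans_le (min_le_right _ _))⟩
        exact (hderiv t (Ioo_subset_Icc_self ht)).deriv ▸ hfg.trans hgB.le)
      a (left_mem_Icc.2 hx.1.le) x (right_mem_Icc.2 hx.1.le) hx.1.le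
    rw [slope_def_field, div_le_iff₀ (sub_pos.2 hx.1)]
    exact hinc
  have hlim : Tendsto (slope f a) (𝓝[>] a) (𝓝 (f' a)) :=
    (hasDerivAt_iff_tendsto_slope.1 (hf.self_of_nhdsWithin self_mem_Ici)).mono_left
      (nhdsWithin_mono a fun x hx => ne_of_gt hx)
  exact le_of_tendsto hlim (mem_of_superset (Ioo_mem_nhdsGT (lt_min hac had)) hslope)

theorem forall_Ico_deriv_le_of_forall_Ioo {f f' g : ℝ → ℝ} {a b : ℝ}
    (hf : ∀ x ∈ Ico a b, HasDerivAt f (f' x) x) (hg : ContinuousOn g (Ico a b))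
    (hle : ∀ x ∈ Ioo a b, f' x ≤ g x) : ∀ x ∈ Ico a b, f' x ≤ g x := by
  rintro x ⟨hax, hxb⟩
  rcases hax.eq_or_lt with rfl | hax
  · exact le_of_eventually_deriv_le (mem_of_superset (Ico_mem_nhdsGE hxb) hf)
      (mem_of_superset (Ioo_mem_nhdsGT hxb) hle)
      ((hg a ⟨le_rfl, hxb⟩).mono_of_mem_nhdsWithin
        (mem_of_superset (Ioo_mem_nhdsGT hxb) Ioo_subset_Ico_self))
  · exact hle x ⟨hax, hxb⟩

theorem le_div_two_mul_of_le_mul {C₀ M τ h y y' : ℝ} (hC₀ : 0 < C₀) (hM : M < 1 / (2 * C₀))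
    (hτ : 0 < τ) (hy : 0 ≤ y) (hy' : y' ≤ C₀ * h * y) (hτh : τ * h ≤ M) :
    y' ≤ y / (2 * τ) := by
  rw [lt_div_iff₀ (by positivity)] at hM
  rw [le_div_iff₀ (by positivity)]
  nlinarith [mul_le_mul_of_nonneg_left hy' hτ.le,
    mul_le_mul_of_nonneg_left hτh (mul_nonneg hC₀.le hy)]

theorem integral_le_of_forall_lt_integral_le {f : ℝ → ℝ} {a b C : ℝ} (hab : a < b)
    (hC : 0 ≤ C) (h : ∀ s ∈ Ico a b, ∫ x in a..s, f x ≤ C) : ∫ x in a..b, f x ≤ C := by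
  by_cases hint : IntervalIntegrable f volume a b
  · have hprim : ContinuousWithinAt (fun s => ∫ x in a..s, f x) (Icc a b) b := by
      simpa only [uIcc_of_le hab.le] using
        intervalIntegral.continuousOn_primitive_interval' hint left_mem_uIcc b right_mem_uIcc
    have hlim : Tendsto (fun s => ∫ x in a..s, f x) (𝓝[<] b) (𝓝 (∫ x in a..b, f x)) :=
      hprim.mono_left
        (nhdsWithin_le_of_mem (mem_of_superset (Ico_mem_nhdsLT hab) Ico_subset_Icc_self))
    exact le_of_tendsto hlim (mem_of_superset (Ico_mem_nhdsLT hab) h)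
  · rwa [intervalIntegral.integral_undef hint]

theorem integral_le_of_hasDerivAt_le_neg {z z' f : ℝ → ℝ} {a b : ℝ} (hab : a < b)
    (hz : ∀ x ∈ Ico a b, HasDerivAt z (z' x) x) (hz' : ∀ x ∈ Ioo a b, z' x ≤ -f x)
    (hz0 : ∀ x ∈ Ico a b, 0 ≤ z x) (hf : ContinuousOn f (Ico a b)) :
    ∫ x in a..b, f x ≤ z a := by
  refine integral_le_of_forall_lt_integral_le hab (hz0 a ⟨le_rfl, hab⟩) fun s hs => ?_
  have hsub : Icc a s ⊆ Ico a b := Icc_subset_Ico_right hs.2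
  have hFTC := intervalIntegral.integral_le_sub_of_hasDeriv_right_of_le (g := fun x => -z x)
    (g' := fun x => -z' x) hs.1
    (fun x hx => (hz x (hsub hx)).continuousAt.neg.continuousWithinAt)
    (fun x hx => (hz x (hsub (Ioo_subset_Icc_self hx))).neg.hasDerivWithinAt)
    ((hf.mono hsub).integrableOn_Icc)
    (fun x hx => le_neg_of_le_neg (hz' x ⟨hx.1, hx.2.trans hs.2⟩))
  linarith [hz0 s ⟨hs.1, hs.2⟩]

theorem stmt14_general (T : ℝ) (C₀ : ℝ) (hC₀ : 0 < C₀)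
    (y y' h : ℝ → ℝ)
    (hy0 : ∀ t ∈ Set.Ico (0 : ℝ) T, 0 ≤ y t)
    (hderiv : ∀ t ∈ Set.Ico (0 : ℝ) T, HasDerivAt y (y' t) t)
    (hineq : ∀ t ∈ Set.Ico (0 : ℝ) T, y' t ≤ C₀ * h t * y t)
    (hsup : ∃ M, M < 1 / (2 * C₀) ∧ ∀ t ∈ Set.Ioo (0 : ℝ) T, (T - t) * h t ≤ M) :
    (∀ t ∈ Set.Ico (0 : ℝ) T,
        HasDerivAt (fun τ => (T - τ) * y τ) ((T - t) * y' t - y t) t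
          ∧ ((T - t) * y' t - y t) + (1 / 2) * y t ≤ 0)
      ∧ ∀ t₀ ∈ Set.Ico (0 : ℝ) T, (∫ t in t₀..T, y t) ≤ 2 * (T - t₀) * y t₀ := by
  obtain ⟨M, hM, hMh⟩ := hsup
  have hy' : ∀ t ∈ Ico 0 T, y' t ≤ y t / (2 * (T - t)) :=
    forall_Ico_deriv_le_of_forall_Ioo hderiv
      (fun t ht => ((hderiv t ht).continuousAt.div (by fun_prop)
        (by linarith [ht.2])).continuousWithinAt)
      (fun t ht => le_div_two_mul_of_le_mul hC₀ hM (sub_pos.2 ht.2)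
        (hy0 t (Ioo_subset_Ico_self ht)) (hineq t (Ioo_subset_Ico_self ht)) (hMh t ht))
  have hz' : ∀ t ∈ Ico 0 T, (T - t) * y' t - y t ≤ -(y t / 2) := fun t ht => by
    have := hy' t ht
    rw [le_div_iff₀ (by linarith [ht.2])] at this
    linarith
  have hz : ∀ t ∈ Ico 0 T, HasDerivAt (fun τ => (T - τ) * y τ) ((T - t) * y' t - y t) t :=
    fun t ht => (((hasDerivAt_id' t).const_sub T).mul (hderiv t ht)).congr_deriv (by ring)
  refine ⟨fun t ht => ⟨hz t ht, by linarith [hz' t ht]⟩, fun t₀ ht₀ => ?_⟩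
  have hsub : Ico t₀ T ⊆ Ico 0 T := Ico_subset_Ico_left ht₀.1
  have hhalf := integral_le_of_hasDerivAt_le_neg (f := fun t => y t / 2) ht₀.2
    (fun t ht => hz t (hsub ht)) (fun t ht => hz' t (hsub (Ioo_subset_Ico_self ht)))
    (fun t ht => mul_nonneg (by linarith [ht.2]) (hy0 t (hsub ht)))
    (fun t ht => ((hderiv t (hsub ht)).continuousAt.div_const 2).continuousWithinAt)
  rw [intervalIntegral.integral_div] at hhalf
  linarith

/-- if `y ≥ 0` satisfies `y' ≤ C₀ h y` on `[0,T)` with `h ≥ 0` and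
`sup_{0<t<T} (T−t) h(t) < 1/(2C₀)`, then `z(t) = (T−t) y(t)` satisfies
`z'(t) + ½ y(t) ≤ 0`, and consequently `∫_{t₀}^T y ≤ 2 (T−t₀) y(t₀)` for every
`t₀ ∈ [0,T)`. -/
theorem stmt14 (T : ℝ) (hT : 0 < T) (C₀ : ℝ) (hC₀ : 0 < C₀)
    (y y' h : ℝ → ℝ)
    (hy0 : ∀ t ∈ Set.Ico (0 : ℝ) T, 0 ≤ y t)
    (hh0 : ∀ t ∈ Set.Ico (0 : ℝ) T, 0 ≤ h t)
    (hderiv : ∀ t ∈ Set.Ico (0 : ℝ) T, HasDerivAt y (y' t) t)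
    (hineq : ∀ t ∈ Set.Ico (0 : ℝ) T, y' t ≤ C₀ * h t * y t)
    (hsup : ∃ M, M < 1 / (2 * C₀) ∧ ∀ t ∈ Set.Ioo (0 : ℝ) T, (T - t) * h t ≤ M) :
    (∀ t ∈ Set.Ico (0 : ℝ) T,
        HasDerivAt (fun τ => (T - τ) * y τ) ((T - t) * y' t - y t) t
          ∧ ((T - t) * y' t - y t) + (1 / 2) * y t ≤ 0)
      ∧ ∀ t₀ ∈ Set.Ico (0 : ℝ) T, (∫ t in t₀..T, y t) ≤ 2 * (T - t₀) * y t₀ :=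
  stmt14_general T C₀ hC₀ y y' h hy0 hderiv hineq hsup
end

section
/- If f̄ : ℝⁿ → ℝⁿ is continuous and ∫_{ℝⁿ} f̄ · φ dy = 0 for every divergence-free vector field φ ∈ C¹_c(ℝⁿ; ℝⁿ), then there exists a scalar function P̄ ∈ C¹ (a distribution) such that f̄ = ∇P̄ (in the distributional sense). -/
/-!
Testing against the divergence-free fields `(∂_w ψ) v - (∂_v ψ) w` shows that the 1-form
`θ = ⟪f, ·⟫` is closed in the sense of distributions. Its mollifications `θₖ` are smooth closed
forms converging to `θ` locally uniformly, and for them the Poincaré lemma says that the radial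
potential `Pₖ x = ∫₀¹ θₖ (t • x) x dt` has derivative `θₖ`. Passing to the limit, the radial
potential `P x = ∫₀¹ ⟪f (t • x), x⟫ dt` of `θ` has derivative `θ`, that is `∇P = f`.
-/

open MeasureTheory Filter Set Function ContinuousLinearMap
open scoped Topology Convolution ContDiff Interval RealInnerProductSpace

theorem hasFDerivAt_intervalIntegral_of_continuous {H F : Type*} [NormedAddCommGroup H]
    [NormedSpace ℝ H] [NormedAddCommGroup F] [NormedSpace ℝ F] {G : H → ℝ → F}
    {G' : H → ℝ → H →L[ℝ] F} (hG : Continuous (uncurry G)) (hG' : Continuous (uncurry G'))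
    (hderiv : ∀ x t, HasFDerivAt (G · t) (G' x t) x) (a b : ℝ) (x₀ : H) :
    HasFDerivAt (fun x => ∫ t in a..b, G x t) (∫ t in a..b, G' x₀ t) x₀ := by
  obtain ⟨C, hC⟩ :=
    isCompact_uIcc.exists_bound_of_continuousOn (hG'.uncurry_left x₀).continuousOn
  have hnear : ∀ᶠ x in 𝓝 x₀, ∀ t ∈ [[a, b]], ‖G' x t‖ < C + 1 :=
    isCompact_uIcc.eventually_forall_of_forall_eventually fun t ht =>
      hG'.norm.continuousAt.eventually_lt continuousAt_const ((hC t ht).trans_lt (lt_add_one C))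
  exact intervalIntegral.hasFDerivAt_integral_of_dominated_of_fderiv_le (bound := fun _ => C + 1)
    hnear (Eventually.of_forall fun x => (hG.uncurry_left x).aestronglyMeasurable)
    ((hG.uncurry_left x₀).intervalIntegrable a b) (hG'.uncurry_left x₀).aestronglyMeasurable
    (Eventually.of_forall fun t ht x hx => (hx t (uIoc_subset_uIcc ht)).le)
    intervalIntegrable_const (Eventually.of_forall fun t _ x _ => hderiv x t)

section RadialPotential

variable {E F : Type*} [NormedAddCommGroup E] [NormedSpace ℝ E] [NormedAddCommGroup F]
  [NormedSpace ℝ F]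

noncomputable def radialPotential (θ : E → E →L[ℝ] F) (x : E) : F :=
  ∫ t in (0 : ℝ)..1, θ (t • x) x

theorem hasFDerivAt_radialPotential [CompleteSpace F] {θ : E → E →L[ℝ] F} (hθ : ContDiff ℝ 1 θ)
    (hsymm : ∀ x v w, fderiv ℝ θ x v w = fderiv ℝ θ x w v) (x : E) :
    HasFDerivAt (radialPotential θ) (θ x) x := by
  have hθd : Differentiable ℝ θ := hθ.differentiable one_ne_zero
  -- By the symmetry of `Dθ`, the `y`-derivative of `θ (t • y) y` is the `t`-derivative of
  -- `t • θ (t • y)`, so it integrates to `θ y`.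
  set G' : E → ℝ → E →L[ℝ] F := fun y t => t • fderiv ℝ θ (t • y) y + θ (t • y)
  have hG' : ∀ y t, HasFDerivAt (fun y => θ (t • y) y) (G' y t) y := by
    intro y t
    refine (((hθd (t • y)).hasFDerivAt.comp y ((hasFDerivAt_id y).const_smul t)).clm_apply
      (hasFDerivAt_id y)).congr_fderiv ?_
    ext v
    simp [G', hsymm, add_comm]
  have hprimitive : ∀ t, HasDerivAt (fun t : ℝ => t • θ (t • x)) (G' x t) t := by
    intro t
    refine ((hasDerivAt_id t).smul ((hθd (t • x)).hasFDerivAt.comp_hasDerivAt t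
      ((hasDerivAt_id t).smul_const x))).congr_deriv ?_
    simp [G']
  have hG'c : Continuous (uncurry G') := by
    unfold G' uncurry
    fun_prop
  have := hasFDerivAt_intervalIntegral_of_continuous (by unfold uncurry; fun_prop) hG'c hG' 0 1 x
  rwa [intervalIntegral.integral_eq_sub_of_hasDerivAt (fun t _ => hprimitive t)
    ((hG'c.uncurry_left x).intervalIntegrable 0 1), one_smul, one_smul, zero_smul,
    sub_zero] at this

theorem TendstoLocallyUniformly.tendsto_radialPotential {ι : Type*} {l : Filter ι}
    [l.IsCountablyGenerated] {θ : ι → E → E →L[ℝ] F} {θ₀ : E → E →L[ℝ] F}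
    (h : TendstoLocallyUniformly θ θ₀ l) (hθ : ∀ i, Continuous (θ i)) (x : E) :
    Tendsto (fun i => radialPotential (θ i) x) l (𝓝 (radialPotential θ₀ x)) := by
  have hunif : TendstoUniformlyOn (fun i t => θ i (t • x)) (fun t => θ₀ (t • x)) l
      [[(0 : ℝ), 1]] :=
    (tendstoLocallyUniformlyOn_iff_tendstoUniformlyOn_of_compact isCompact_uIcc).1
      (h.comp (· • x) (continuous_id.smul continuous_const)).tendstoLocallyUniformlyOn
  have hunif_apply : TendstoUniformlyOn (fun i t => θ i (t • x) x) (fun t => θ₀ (t • x) x) l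
      [[(0 : ℝ), 1]] :=
    (ContinuousLinearMap.apply ℝ F x).uniformContinuous.comp_tendstoUniformlyOn hunif
  exact hunif_apply.tendsto_intervalIntegral_of_continuousOn
    (Eventually.of_forall fun i => by fun_prop)

end RadialPotential

theorem ContDiffBump.exists_tendsto_rOut_zero {X : Type*} (c : X) :
    ∃ φ : ℕ → ContDiffBump c, Tendsto (fun k => (φ k).rOut) atTop (𝓝 0) :=
  ⟨fun k => ⟨1 / ((k : ℝ) + 1) / 2, 1 / ((k : ℝ) + 1), by positivity,
    half_lt_self (by positivity)⟩, tendsto_one_div_add_atTop_nhds_zero_nat⟩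

section WeaklyClosed

variable {F : Type*} [NormedAddCommGroup F] [NormedSpace ℝ F]
  {G : Type*} [NormedAddCommGroup G] [NormedSpace ℝ G] [FiniteDimensional ℝ G]
  [MeasurableSpace G] [BorelSpace G] {μ : Measure G} [μ.IsAddHaarMeasure]

theorem ContDiffBump.tendstoLocallyUniformly_normed_convolution [CompleteSpace F] {ι : Type*}
    {φ : ι → ContDiffBump (0 : G)} {l : Filter ι} (hφ : Tendsto (fun i => (φ i).rOut) l (𝓝 0))
    {g : G → F} (hg : Continuous g) :
    TendstoLocallyUniformly (fun i => (φ i).normed μ ⋆[lsmul ℝ ℝ, μ] g) g l := by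
  rw [tendstoLocallyUniformly_iff_forall_tendsto]
  intro x
  have hgx : Tendsto (fun y : ι × G => g y.2) (l ×ˢ 𝓝 x) (𝓝 (g x)) :=
    (hg.tendsto x).comp tendsto_snd
  have hconv := ContDiffBump.convolution_tendsto_right (μ := μ) (g := fun _ => g)
    (hφ.comp tendsto_fst) (Eventually.of_forall fun _ => hg.aestronglyMeasurable)
    ((hg.tendsto x).comp tendsto_snd) tendsto_snd
  exact (hgx.prodMk_nhds hconv).mono_right (nhds_le_uniformity _)

theorem fderiv_convolution_apply_apply {g : G → ℝ} (hg : ContDiff ℝ 1 g)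
    (hgc : HasCompactSupport g) {θ : G → G →L[ℝ] F} (hθ : LocallyIntegrable θ μ) (x v w : G) :
    fderiv ℝ (g ⋆[lsmul ℝ ℝ, μ] θ) x v w = ∫ t, fderiv ℝ g (x - t) v • θ t w ∂μ := by
  set L := (lsmul ℝ ℝ : ℝ →L[ℝ] (G →L[ℝ] F) →L[ℝ] G →L[ℝ] F).flip
  have hDg : Continuous (fderiv ℝ g) := hg.continuous_fderiv one_ne_zero
  have hint : Integrable (fun t => L (θ t) (fderiv ℝ g (x - t) v)) μ :=
    (((hgc.fderiv ℝ).comp_left (g := fun A : G →L[ℝ] ℝ => A v) rfl).convolutionExists_right L hθ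
      (hDg.clm_apply continuous_const) x).integrable
  rw [← convolution_flip, (hgc.hasFDerivAt_convolution_right L hθ hg x).fderiv,
    convolution_precompR_apply L hθ (hgc.fderiv ℝ) hDg, convolution_def, integral_apply hint]
  rfl

/-- `dθ = 0` in the sense of distributions: `∂_w (θ v) = ∂_v (θ w)` when tested against `ψ`. -/
def IsWeaklyClosed (μ : Measure G) (θ : G → G →L[ℝ] ℝ) : Prop :=
  ∀ ψ : G → ℝ, ContDiff ℝ ∞ ψ → HasCompactSupport ψ → ∀ v w : G,
    ∫ x, θ x v * fderiv ℝ ψ x w ∂μ = ∫ x, θ x w * fderiv ℝ ψ x v ∂μ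

variable {θ : G → G →L[ℝ] ℝ}

theorem IsWeaklyClosed.fderiv_convolution_symm (hθ : IsWeaklyClosed μ θ)
    (hθi : LocallyIntegrable θ μ) {g : G → ℝ} (hg : ContDiff ℝ ∞ g) (hgc : HasCompactSupport g)
    (x v w : G) :
    fderiv ℝ (g ⋆[lsmul ℝ ℝ, μ] θ) x v w = fderiv ℝ (g ⋆[lsmul ℝ ℝ, μ] θ) x w v := by
  set ψ : G → ℝ := fun s => g (x - s)
  have hDψ : ∀ t u, fderiv ℝ ψ t u = -fderiv ℝ g (x - t) u := by
    intro t u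
    have h := ((hg.differentiable (by simp)) (x - t)).hasFDerivAt.comp t
      ((hasFDerivAt_id t).const_sub x)
    rw [show ψ = g ∘ (x - ·) from rfl, h.fderiv]
    simp
  have hconv : ∀ v w,
      fderiv ℝ (g ⋆[lsmul ℝ ℝ, μ] θ) x v w = -∫ t, θ t w * fderiv ℝ ψ t v ∂μ := by
    intro v w
    rw [fderiv_convolution_apply_apply (hg.of_le (by simp)) hgc hθi, ← integral_neg]
    simp [hDψ, mul_comm]
  rw [hconv, hconv, hθ ψ (hg.comp (contDiff_const.sub contDiff_id))
    (hgc.comp_homeomorph (Homeomorph.subLeft x)) w v]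

theorem IsWeaklyClosed.hasFDerivAt_radialPotential (hθ : IsWeaklyClosed μ θ)
    (hθc : Continuous θ) (x : G) : HasFDerivAt (radialPotential θ) (θ x) x := by
  obtain ⟨φ, hφ⟩ := ContDiffBump.exists_tendsto_rOut_zero (0 : G)
  have hsmooth : ∀ k, ContDiff ℝ 1 ((φ k).normed μ ⋆[lsmul ℝ ℝ, μ] θ) := fun k =>
    (φ k).hasCompactSupport_normed.contDiff_convolution_left _ (φ k).contDiff_normed
      hθc.locallyIntegrable
  have hlim := ContDiffBump.tendstoLocallyUniformly_normed_convolution (μ := μ) hφ hθc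
  exact hasFDerivAt_of_tendstoLocallyUniformlyOn isOpen_univ hlim.tendstoLocallyUniformlyOn
    (fun k y _ => _root_.hasFDerivAt_radialPotential (hsmooth k)
      (hθ.fderiv_convolution_symm hθc.locallyIntegrable (φ k).contDiff_normed
        (φ k).hasCompactSupport_normed) y)
    (fun y _ => hlim.tendsto_radialPotential (fun k => (hsmooth k).continuous) y) (mem_univ x)

end WeaklyClosed

section Euclidean

variable {ι : Type*} [Fintype ι] [DecidableEq ι]

noncomputable def divergence (φ : EuclideanSpace ℝ ι → EuclideanSpace ℝ ι)
    (x : EuclideanSpace ℝ ι) : ℝ :=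
  ∑ i, fderiv ℝ φ x (EuclideanSpace.single i 1) i

theorem EuclideanSpace.sum_apply_single_mul (L : EuclideanSpace ℝ ι →L[ℝ] ℝ)
    (v : EuclideanSpace ℝ ι) : ∑ i, L (EuclideanSpace.single i 1) * v i = L v := by
  conv_rhs => rw [← (EuclideanSpace.basisFun ι ℝ).sum_repr v]
  simp [mul_comm]

theorem divergence_rotation_eq_zero {ψ : EuclideanSpace ℝ ι → ℝ} (hψ : ContDiff ℝ 2 ψ)
    (v w x : EuclideanSpace ℝ ι) :
    divergence (fun y => fderiv ℝ ψ y w • v - fderiv ℝ ψ y v • w) x = 0 := by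
  have hD : DifferentiableAt ℝ (fderiv ℝ ψ) x :=
    (hψ.fderiv_right (m := 1) (by norm_num)).differentiable (by norm_num) x
  have hD_apply : ∀ u,
      HasFDerivAt (fun y => fderiv ℝ ψ y u) ((fderiv ℝ (fderiv ℝ ψ) x).flip u) x :=
    fun u => by simpa using hD.hasFDerivAt.clm_apply (hasFDerivAt_const u x)
  have hφ : fderiv ℝ (fun y => fderiv ℝ ψ y w • v - fderiv ℝ ψ y v • w) x =
      ((fderiv ℝ (fderiv ℝ ψ) x).flip w).smulRight v
        - ((fderiv ℝ (fderiv ℝ ψ) x).flip v).smulRight w :=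
    (((hD_apply w).smul_const v).sub ((hD_apply v).smul_const w)).fderiv
  rw [divergence, hφ]
  simp only [sub_apply, smulRight_apply, PiLp.sub_apply, PiLp.smul_apply, smul_eq_mul,
    Finset.sum_sub_distrib, EuclideanSpace.sum_apply_single_mul]
  rw [flip_apply, flip_apply, hψ.contDiffAt.isSymmSndFDerivAt (by simp) v w, sub_self]

theorem isWeaklyClosed_toDual_of_divergence_free {f : EuclideanSpace ℝ ι → EuclideanSpace ℝ ι}
    (hf : Continuous f)
    (h : ∀ φ : EuclideanSpace ℝ ι → EuclideanSpace ℝ ι, ContDiff ℝ 1 φ → HasCompactSupport φ →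
      (∀ x, divergence φ x = 0) → ∫ x, ⟪f x, φ x⟫ = 0) :
    IsWeaklyClosed volume (fun x => InnerProductSpace.toDual ℝ _ (f x)) := by
  intro ψ hψ hψc v w
  have hDψ : ContDiff ℝ 1 (fderiv ℝ ψ) := hψ.fderiv_right (by norm_cast)
  have hint : ∀ u u', Integrable (fun x => fderiv ℝ ψ x u' * ⟪f x, u⟫) := fun u u' =>
    (by fun_prop : Continuous _).integrable_of_hasCompactSupport
      ((hψc.fderiv ℝ).comp_left (g := fun A : _ →L[ℝ] ℝ => A u') rfl).mul_right
  have hrot := h (fun y => fderiv ℝ ψ y w • v - fderiv ℝ ψ y v • w)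
    (((hDψ.clm_apply contDiff_const).smul contDiff_const).sub
      ((hDψ.clm_apply contDiff_const).smul contDiff_const))
    ((hψc.fderiv ℝ).comp_left (g := fun A : _ →L[ℝ] ℝ => A w • v - A v • w) (by simp))
    (divergence_rotation_eq_zero (hψ.of_le (by norm_cast)) v w)
  simp only [inner_sub_right, inner_smul_right] at hrot
  rw [integral_sub (hint v w) (hint w v), sub_eq_zero] at hrot
  show ∫ x, ⟪f x, v⟫ * fderiv ℝ ψ x w = ∫ x, ⟪f x, w⟫ * fderiv ℝ ψ x v
  simpa only [mul_comm _ (fderiv ℝ ψ _ _)] using hrot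

end Euclidean

/-- de Rham-type lemma: if `f̄ : ℝⁿ → ℝⁿ` is continuous and
`∫ f̄ · φ = 0` for every divergence-free `φ ∈ C¹_c(ℝⁿ;ℝⁿ)`, then `f̄ = ∇P̄` for some
scalar function `P̄` (which, `f̄` being continuous, can be taken C¹ with the identity
holding pointwise). -/
theorem stmt19 (n : ℕ) (f : EuclideanSpace ℝ (Fin n) → EuclideanSpace ℝ (Fin n))
    (hf : Continuous f)
    (h : ∀ φ : EuclideanSpace ℝ (Fin n) → EuclideanSpace ℝ (Fin n),
      ContDiff ℝ 1 φ → HasCompactSupport φ →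
      (∀ x, (∑ i, fderiv ℝ φ x (EuclideanSpace.single i 1) i) = 0) →
      ∫ x, ⟪f x, φ x⟫ = 0) :
    ∃ P : EuclideanSpace ℝ (Fin n) → ℝ, ContDiff ℝ 1 P ∧ ∀ x, gradient P x = f x := by
  set θ := fun x => InnerProductSpace.toDual ℝ (EuclideanSpace ℝ (Fin n)) (f x)
  have hθc : Continuous θ := (InnerProductSpace.toDual ℝ _).continuous.comp hf
  have hP : ∀ x, HasGradientAt (radialPotential θ) (f x) x :=
    (isWeaklyClosed_toDual_of_divergence_free hf h).hasFDerivAt_radialPotential hθc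
  exact ⟨radialPotential θ, contDiff_one_iff_hasFDerivAt.2 ⟨θ, hθc, hP⟩,
    fun x => (hP x).gradient⟩
end
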